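/- Let n ≥ 1 and let l satisfy q^l ≥ n. Define b_0 = 1 and, for j > 0, b_j = ∏_{i=1}^{l_j−1}(θ^{q^i} − t) · ∂_θ^{(j)}( ∏_{i=1}^{l_j−1}(θ^{q^i} − t)^{−1} ) ∈ 𝔽_q(θ,t) with l_j = ⌊log_q(j)⌋ + 1. Then for every k with 0 ≤ k < n: Σ_{i+j=k} ( ∂_t^{(i)}(b_j) )|_{t=θ} = ( ∂_θ^{(k)}(η_{l−1}) )|_{t=θ}, all rational functions involved being regular at t = θ. -/

import Mathlib

noncomputable section

open Polynomial Finset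

variable (F : Type*) [Field F]

/-- The Hasse derivative with respect to `θ` on `𝔽_q[θ,t]`, modelled as
`F[θ][t]` (outer variable `t`): it acts coefficientwise by the Hasse derivative on `F[θ]`. -/
def hasseDerivTheta (n : ℕ) (f : Polynomial (Polynomial F)) : Polynomial (Polynomial F) :=
  f.sum fun i a => Polynomial.C (Polynomial.hasseDeriv n a) * Polynomial.X ^ i

/-- The embedding `𝔽_q[θ,t] → 𝔽_q(θ,t)`, i.e. `F[θ][t] → (RatFunc F)(t)`. -/
def embPoly : Polynomial (Polynomial F) →+* RatFunc (RatFunc F) :=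
  (algebraMap (Polynomial (RatFunc F)) (RatFunc (RatFunc F))).comp
    (Polynomial.mapRingHom (algebraMap (Polynomial F) (RatFunc F)))

/-- `∏_{i=1}^{l_j−1}(θ^{q^i} − t) ∈ 𝔽_q(θ,t)` with `l_j = ⌊log_q j⌋ + 1`
(so the product runs over `1 ≤ i ≤ ⌊log_q j⌋`), `θ = RatFunc.X : RatFunc F`. -/
def Lprod (q j : ℕ) : RatFunc (RatFunc F) :=
  algebraMap (Polynomial (RatFunc F)) (RatFunc (RatFunc F))
    (∏ i ∈ Icc 1 (Nat.log q j),
      (Polynomial.C ((RatFunc.X : RatFunc F) ^ q ^ i) - Polynomial.X))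

/-- `η_l(t) = ∏_{m=1}^l (t^{q^m}−θ)/(θ^{q^m}−θ) ∈ K[t]`. -/
def etaPoly (q l : ℕ) : Polynomial (RatFunc F) :=
  ∏ m ∈ Icc 1 l,
    Polynomial.C (((RatFunc.X : RatFunc F) ^ q ^ m - RatFunc.X)⁻¹) *
      (Polynomial.X ^ q ^ m - Polynomial.C (RatFunc.X : RatFunc F))


/-!
A higher derivation `D` on a ring `A` is the same thing as a ring homomorphism
`A → A⟦X⟧`, `x ↦ ∑ Dₙ(x) Xⁿ`. For `∂_θ` it is the substitution `θ ↦ θ + X`, so in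
characteristic `p` it sends `θ^{q^i} - t` to `(θ^{q^i} - t) + X^{q^i}`. Hence `b_j` is the
`j`-th coefficient of `∏_{i ≤ log_q j} (θ^{q^i} - t) / (θ^{q^i} - t + X^{q^i})`, and since the
factors with `q^i > j` are `≡ 1 mod X^{j+1}`, the product may be taken up to `l - 1` for all
`j < q^l` at once. Applying `∂_t` (which is `t ↦ t + Y`) coefficientwise and then setting
`Y = X` turns `∑_{i+j=k} ∂_t^{(i)} b_j` into the `k`-th coefficient of
`∏ (θ^{q^i} - t - X) / (θ^{q^i} - t - X + X^{q^i})`, whereas `∂_θ^{(k)} η_{l-1}` is the `k`-th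
coefficient of `∏ (t^{q^m} - θ - X) / (θ^{q^m} - θ - X + X^{q^m})`. All these series have
coefficients in the local ring of `K[t]` at `t = θ`, and there both specialise to
`∏ (a_m - X) / (a_m - X + X^{q^m})` with `a_m = θ^{q^m} - θ`.
-/

open scoped PowerSeries

structure IsHigherDerivation {A : Type*} [CommRing A] (D : ℕ → A → A) : Prop where
  zero_eq_id : D 0 = id
  map_add : ∀ n x y, D n (x + y) = D n x + D n y
  leibniz : ∀ n x y, D n (x * y) = ∑ ij ∈ antidiagonal n, D ij.1 x * D ij.2 y

namespace IsHigherDerivation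

variable {A : Type*} [CommRing A] {D : ℕ → A → A}

theorem mk_mul (hD : IsHigherDerivation D) (x y : A) :
    PowerSeries.mk (D · (x * y)) = PowerSeries.mk (D · x) * PowerSeries.mk (D · y) := by
  ext n
  simp [PowerSeries.coeff_mul, hD.leibniz]

def toRingHom (hD : IsHigherDerivation D) : A →+* A⟦X⟧ where
  toFun x := PowerSeries.mk (D · x)
  map_one' := by
    have hu : IsUnit (PowerSeries.mk (D · (1 : A))) :=
      PowerSeries.isUnit_iff_constantCoeff.mpr (by simp [hD.zero_eq_id])
    exact hu.mul_eq_left.mp (by rw [← hD.mk_mul, one_mul])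
  map_mul' := hD.mk_mul
  map_zero' := by
    ext n
    simpa using hD.map_add n 0 0
  map_add' x y := by
    ext n
    simp [hD.map_add]

@[simp]
theorem coeff_toRingHom (hD : IsHigherDerivation D) (n : ℕ) (x : A) :
    PowerSeries.coeff n (hD.toRingHom x) = D n x :=
  PowerSeries.coeff_mk n (D · x)

end IsHigherDerivation

theorem Finset.sum_antidiagonal_antidiagonal_comm {M : Type*} [AddCommMonoid M]
    (f : ℕ → ℕ → ℕ → ℕ → M) (n : ℕ) :
    ∑ p ∈ antidiagonal n, ∑ r ∈ antidiagonal p.1, ∑ s ∈ antidiagonal p.2,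
        f r.1 r.2 s.1 s.2 =
      ∑ p ∈ antidiagonal n, ∑ r ∈ antidiagonal p.1, ∑ s ∈ antidiagonal p.2,
        f r.1 s.1 r.2 s.2 := by
  simp only [Finset.sum_sigma']
  refine Finset.sum_nbij'
    (fun x ↦ ⟨(x.2.1.1 + x.2.2.1, x.2.1.2 + x.2.2.2), (x.2.1.1, x.2.2.1), (x.2.1.2, x.2.2.2)⟩)
    (fun x ↦ ⟨(x.2.1.1 + x.2.2.1, x.2.1.2 + x.2.2.2), (x.2.1.1, x.2.2.1), (x.2.1.2, x.2.2.2)⟩)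
    ?_ ?_ ?_ ?_ ?_
  all_goals
    rintro ⟨⟨i, j⟩, ⟨a, b⟩, ⟨c, d⟩⟩
    simp only [mem_sigma, HasAntidiagonal.mem_antidiagonal, and_true]
  · omega
  · omega
  · rintro ⟨-, rfl, rfl⟩
    rfl
  · rintro ⟨-, rfl, rfl⟩
    rfl
  · exact fun _ ↦ trivial

namespace PowerSeries

variable {A : Type*} [CommRing A]

theorem sum_antidiagonal_coeff_coeff_C_mul_X_pow (φ : A⟦X⟧) (m n : ℕ) :
    ∑ p ∈ antidiagonal n, coeff p.1 (coeff p.2 (C φ * X ^ m)) = coeff n (φ * X ^ m) := by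
  rw [coeff_mul_X_pow']
  simp only [coeff_C_mul_X_pow, apply_ite (coeff _), map_zero]
  rw [← sum_filter, HasAntidiagonal.filter_snd_eq_antidiagonal n m]
  split_ifs <;> simp

/-- `Φ(X, Y) ↦ Φ(X, X)`. -/
def restrictDiagonal : A⟦X⟧⟦X⟧ →+* A⟦X⟧ where
  toFun Φ := mk fun n ↦ ∑ p ∈ antidiagonal n, coeff p.1 (coeff p.2 Φ)
  map_one' := by
    ext n
    simpa using sum_antidiagonal_coeff_coeff_C_mul_X_pow (1 : A⟦X⟧) 0 n
  map_mul' Φ Ψ := by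
    ext n
    simp only [coeff_mk, coeff_mul, map_sum, sum_mul, mul_sum]
    refine (sum_congr rfl fun p _ ↦ sum_comm).trans <|
      .trans ?_ (sum_congr rfl fun p _ ↦ sum_comm)
    exact sum_antidiagonal_antidiagonal_comm
      (fun a b c d ↦ coeff a (coeff c Φ) * coeff b (coeff d Ψ)) n
  map_zero' := by
    ext n
    simp
  map_add' Φ Ψ := by
    ext n
    simp [sum_add_distrib]

theorem coeff_restrictDiagonal (Φ : A⟦X⟧⟦X⟧) (n : ℕ) :
    coeff n (restrictDiagonal Φ) = ∑ p ∈ antidiagonal n, coeff p.1 (coeff p.2 Φ) := by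
  simp [restrictDiagonal]

theorem restrictDiagonal_C_mul_X_pow (φ : A⟦X⟧) (m : ℕ) :
    restrictDiagonal (C φ * X ^ m) = φ * X ^ m := by
  ext n
  rw [coeff_restrictDiagonal, sum_antidiagonal_coeff_coeff_C_mul_X_pow]

theorem restrictDiagonal_C (φ : A⟦X⟧) : restrictDiagonal (C φ) = φ := by
  simpa using restrictDiagonal_C_mul_X_pow φ 0

theorem restrictDiagonal_X : restrictDiagonal (X : A⟦X⟧⟦X⟧) = X := by
  simpa using restrictDiagonal_C_mul_X_pow (1 : A⟦X⟧) 1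

end PowerSeries

theorem map_ringInverse {M N G : Type*} [MonoidWithZero M] [MonoidWithZero N] [FunLike G M N]
    [MonoidHomClass G M N] (f : G) {x : M} (hx : IsUnit x) :
    f (Ring.inverse x) = Ring.inverse (f x) := by
  obtain ⟨u, rfl⟩ := hx
  rw [Ring.inverse_unit]
  simpa using (Ring.inverse_unit (Units.map (f : M →* N) u)).symm

namespace PowerSeries

variable {R S : Type*} [CommRing R] [CommRing S]

instance instCharP (p : ℕ) [CharP R p] : CharP R⟦X⟧ p :=
  charP_of_injective_ringHom C_injective p

theorem isUnit_C_add_X_pow {α : R} (hα : IsUnit α) {N : ℕ} (hN : N ≠ 0) :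
    IsUnit (C α + X ^ N) :=
  isUnit_iff_constantCoeff.mpr (by simpa [hN] using hα)

theorem isUnit_C_sub_X_add_X_pow {α : R} (hα : IsUnit α) {N : ℕ} (hN : N ≠ 0) :
    IsUnit (C α - X + X ^ N) :=
  isUnit_iff_constantCoeff.mpr (by simpa [hN] using hα)

theorem map_C_mul_inverse_C_add_X_pow (f : R →+* S) {α : R} (hα : IsUnit α) {N : ℕ}
    (hN : N ≠ 0) :
    map f (C α * Ring.inverse (C α + X ^ N)) = C (f α) * Ring.inverse (C (f α) + X ^ N) := by
  rw [map_mul, map_ringInverse _ (isUnit_C_add_X_pow hα hN)]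
  simp

theorem map_inverse_C_sub_X_add_X_pow_mul (f : R →+* S) {β : R} (hβ : IsUnit β) {N : ℕ}
    (hN : N ≠ 0) (γ : R) :
    map f (Ring.inverse (C β - X + X ^ N) * (C γ - X)) =
      Ring.inverse (C (f β) - X + X ^ N) * (C (f γ) - X) := by
  rw [map_mul, map_ringInverse _ (isUnit_C_sub_X_add_X_pow hβ hN)]
  simp

theorem restrictDiagonal_C_mul_inverse_C_add_X_pow {α : R⟦X⟧} (hα : IsUnit α) {N : ℕ}
    (hN : N ≠ 0) :
    restrictDiagonal (C α * Ring.inverse (C α + X ^ N)) = α * Ring.inverse (α + X ^ N) := by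
  rw [map_mul, map_ringInverse _ (isUnit_C_add_X_pow hα hN)]
  simp [restrictDiagonal_C, restrictDiagonal_X]

theorem X_pow_dvd_C_mul_inverse_C_add_X_pow_sub_one {α : R} (hα : IsUnit α) {N : ℕ}
    (hN : N ≠ 0) : X ^ N ∣ C α * Ring.inverse (C α + X ^ N) - 1 := by
  have hu := isUnit_C_add_X_pow hα hN
  refine ⟨-Ring.inverse (C α + X ^ N), ?_⟩
  calc C α * Ring.inverse (C α + X ^ N) - 1
      = C α * Ring.inverse (C α + X ^ N) - (C α + X ^ N) * Ring.inverse (C α + X ^ N) := by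
        rw [Ring.mul_inverse_cancel _ hu]
    _ = _ := by ring

theorem coeff_prod_Icc_eq_of_X_pow_dvd_sub_one (f : ℕ → R⟦X⟧) {m M j : ℕ} (hmM : m ≤ M)
    (hf : ∀ i ∈ Ioc m M, X ^ (j + 1) ∣ f i - 1) :
    coeff j (∏ i ∈ Icc 1 M, f i) = coeff j (∏ i ∈ Icc 1 m, f i) := by
  have htail : X ^ (j + 1) ∣ (∏ i ∈ Ioc m M, f i) - 1 := by
    refine Finset.prod_induction _ (fun g ↦ X ^ (j + 1) ∣ g - 1) (fun g h hg hh ↦ ?_)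
      (by simp) hf
    rw [show g * h - 1 = g * (h - 1) + (g - 1) by ring]
    exact (dvd_mul_of_dvd_right hh g).add hg
  have hsplit : ∏ i ∈ Icc 1 M, f i =
      (∏ i ∈ Icc 1 m, f i) + (∏ i ∈ Icc 1 m, f i) * ((∏ i ∈ Ioc m M, f i) - 1) := by
    have hIcc : ∀ n, Icc 1 n = Ioc 0 n := fun n ↦ Icc_add_one_left_eq_Ioc 0 n
    rw [mul_sub, mul_one, add_sub_cancel, hIcc, hIcc, prod_Ioc_consecutive _ (Nat.zero_le m) hmM]
  rw [hsplit, map_add, X_pow_dvd_iff.mp (dvd_mul_of_dvd_right htail _) j (lt_add_one j),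
    add_zero]

end PowerSeries

instance Polynomial.ker_evalRingHom_isPrime {K : Type*} [Field K] (a : K) :
    (RingHom.ker (Polynomial.evalRingHom a)).IsPrime :=
  RingHom.ker_isPrime _

/-- The local ring of `K[X]` at `a`, i.e. the rational functions over `K` regular at `a`. -/
abbrev RegularAt {K : Type*} [Field K] (a : K) :=
  Localization.AtPrime (RingHom.ker (Polynomial.evalRingHom a))

namespace RegularAt

variable {K : Type*} [Field K] (a : K)

theorem eval_ne_zero_of_mem_primeCompl {Q : K[X]}
    (hQ : Q ∈ (RingHom.ker (Polynomial.evalRingHom a)).primeCompl) : Q.eval a ≠ 0 :=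
  fun h ↦ hQ (RingHom.mem_ker.mpr h)

def toRatFunc : RegularAt a →+* RatFunc K :=
  IsLocalization.lift (M := (RingHom.ker (Polynomial.evalRingHom a)).primeCompl)
    (g := algebraMap K[X] (RatFunc K)) fun Q ↦ isUnit_iff_ne_zero.mpr <|
      RatFunc.algebraMap_ne_zero fun h ↦ eval_ne_zero_of_mem_primeCompl a Q.2 (by simp [h])

def eval : RegularAt a →+* K :=
  IsLocalization.lift (M := (RingHom.ker (Polynomial.evalRingHom a)).primeCompl)
    (g := Polynomial.evalRingHom a) fun Q ↦
      isUnit_iff_ne_zero.mpr (eval_ne_zero_of_mem_primeCompl a Q.2)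

@[simp]
theorem toRatFunc_algebraMap (P : K[X]) :
    toRatFunc a (algebraMap K[X] (RegularAt a) P) = algebraMap K[X] (RatFunc K) P :=
  IsLocalization.lift_eq _ P

@[simp]
theorem eval_algebraMap (P : K[X]) : eval a (algebraMap K[X] (RegularAt a) P) = P.eval a :=
  IsLocalization.lift_eq _ P

theorem isUnit_of_eval_ne_zero {s : RegularAt a} (hs : eval a s ≠ 0) : IsUnit s := by
  refine IsLocalRing.notMem_maximalIdeal.mp fun hmem ↦ hs ?_
  rw [← IsLocalization.AtPrime.map_eq_maximalIdeal (RingHom.ker (Polynomial.evalRingHom a))]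
    at hmem
  refine (Ideal.map_le_iff_le_comap.mpr ?_ hmem : s ∈ RingHom.ker (eval a))
  intro P hP
  simpa [RingHom.mem_ker] using hP

theorem exists_eq_div (s : RegularAt a) : ∃ P Q : K[X], Q.eval a ≠ 0 ∧
    toRatFunc a s = algebraMap K[X] (RatFunc K) P / algebraMap K[X] (RatFunc K) Q ∧
      eval a s = P.eval a / Q.eval a := by
  obtain ⟨⟨P, Q⟩, rfl⟩ := IsLocalization.mk'_surjective
    (RingHom.ker (Polynomial.evalRingHom a)).primeCompl s
  have hQ := eval_ne_zero_of_mem_primeCompl a Q.2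
  have hQ' : algebraMap K[X] (RatFunc K) Q ≠ 0 :=
    RatFunc.algebraMap_ne_zero (by rintro h; simp [h] at hQ)
  refine ⟨P, Q, hQ, (IsLocalization.lift_mk'_spec _ _ _ _).mpr ?_,
    (IsLocalization.lift_mk'_spec _ _ _ _).mpr ?_⟩
  · rw [mul_div_cancel₀ _ hQ']
  · simp [mul_div_cancel₀ _ hQ]

theorem eval_denom_toRatFunc_ne_zero (s : RegularAt a) : (toRatFunc a s).denom.eval a ≠ 0 := by
  obtain ⟨P, Q, hQ, hs, -⟩ := exists_eq_div a s
  have hQ0 : Q ≠ 0 := by rintro rfl; simp at hQ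
  obtain ⟨R, hR⟩ := (RatFunc.denom_dvd hQ0).mpr ⟨P, hs⟩
  intro h
  exact hQ (by rw [hR, Polynomial.eval_mul, h, zero_mul])

theorem ratFuncEval_toRatFunc (s : RegularAt a) :
    RatFunc.eval (RingHom.id K) a (toRatFunc a s) = eval a s := by
  obtain ⟨P, Q, hQ, hs, hev⟩ := exists_eq_div a s
  have hQ0 : algebraMap K[X] (RatFunc K) Q ≠ 0 :=
    RatFunc.algebraMap_ne_zero (by rintro rfl; simp at hQ)
  have hmul := RatFunc.eval_mul (f := RingHom.id K) (a := a) (x := toRatFunc a s)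
    (y := algebraMap _ _ Q) (eval_denom_toRatFunc_ne_zero a s) (by simp)
  rw [hs, div_mul_cancel₀ _ hQ0, ← hs] at hmul
  rw [hev, eq_div_iff hQ]
  simpa using hmul.symm

end RegularAt

section FunctionField

variable {F}

@[simp]
theorem embPoly_C_X : embPoly F (C X) = RatFunc.C (RatFunc.X : RatFunc F) := by
  simp [embPoly]

@[simp]
theorem embPoly_X : embPoly F X = (RatFunc.X : RatFunc (RatFunc F)) := by
  simp [embPoly]

theorem hasseDerivTheta_C (n : ℕ) (g : F[X]) :
    hasseDerivTheta F n (C g) = C (hasseDeriv n g) := by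
  simp [hasseDerivTheta]

theorem hasseDerivTheta_X (n : ℕ) : hasseDerivTheta F n X = if n = 0 then X else 0 := by
  rcases n with _ | n <;> simp [hasseDerivTheta, hasseDeriv_apply_one]

variable (E : RatFunc (RatFunc F) →+* (RatFunc (RatFunc F))⟦X⟧)

theorem map_theta_of_hasseDerivTheta
    (hE : ∀ n f, PowerSeries.coeff n (E (embPoly F f)) = embPoly F (hasseDerivTheta F n f)) :
    E (RatFunc.C (RatFunc.X : RatFunc F)) =
      PowerSeries.C (RatFunc.C (RatFunc.X : RatFunc F)) + PowerSeries.X := by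
  ext n
  conv_lhs => rw [← embPoly_C_X, hE, hasseDerivTheta_C]
  rcases n with _ | _ | n <;> simp [hasseDeriv_X, PowerSeries.coeff_X]

theorem map_t_of_hasseDerivTheta
    (hE : ∀ n f, PowerSeries.coeff n (E (embPoly F f)) = embPoly F (hasseDerivTheta F n f)) :
    E RatFunc.X = PowerSeries.C RatFunc.X := by
  ext n
  conv_lhs => rw [← embPoly_X, hE, hasseDerivTheta_X]
  rcases n with _ | n <;> simp [PowerSeries.coeff_C]

theorem map_theta_of_hasseDeriv
    (hE : ∀ n f, PowerSeries.coeff n (E (embPoly F f)) = embPoly F (hasseDeriv n f)) :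
    E (RatFunc.C (RatFunc.X : RatFunc F)) =
      PowerSeries.C (RatFunc.C (RatFunc.X : RatFunc F)) := by
  ext n
  conv_lhs => rw [← embPoly_C_X, hE]
  rcases n with _ | n <;> simp [PowerSeries.coeff_C, hasseDeriv_C]

theorem map_t_of_hasseDeriv
    (hE : ∀ n f, PowerSeries.coeff n (E (embPoly F f)) = embPoly F (hasseDeriv n f)) :
    E RatFunc.X = PowerSeries.C RatFunc.X + PowerSeries.X := by
  ext n
  conv_lhs => rw [← embPoly_X, hE]
  rcases n with _ | _ | n <;> simp [hasseDeriv_X, PowerSeries.coeff_X]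

end FunctionField

section Frobenius

variable {F} {p : ℕ} [Fact p.Prime] [CharP F p]
variable (E : RatFunc (RatFunc F) →+* (RatFunc (RatFunc F))⟦X⟧)

theorem map_theta_pow_sub_t_of_hasseDerivTheta
    (hE : ∀ n f, PowerSeries.coeff n (E (embPoly F f)) = embPoly F (hasseDerivTheta F n f))
    {N n : ℕ} (hN : N = p ^ n) :
    E (RatFunc.C (RatFunc.X : RatFunc F) ^ N - RatFunc.X) =
      PowerSeries.C (RatFunc.C (RatFunc.X : RatFunc F) ^ N - RatFunc.X) + PowerSeries.X ^ N := by
  rw [map_sub, map_pow, map_theta_of_hasseDerivTheta E hE, map_t_of_hasseDerivTheta E hE, hN,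
    add_pow_char_pow]
  simp only [map_sub, map_pow]
  ring

theorem map_theta_pow_sub_t_of_hasseDeriv
    (hE : ∀ n f, PowerSeries.coeff n (E (embPoly F f)) = embPoly F (hasseDeriv n f)) (N : ℕ) :
    E (RatFunc.C (RatFunc.X : RatFunc F) ^ N - RatFunc.X) =
      PowerSeries.C (RatFunc.C (RatFunc.X : RatFunc F) ^ N - RatFunc.X) - PowerSeries.X := by
  rw [map_sub, map_pow, map_theta_of_hasseDeriv E hE, map_t_of_hasseDeriv E hE]
  simp only [map_sub, map_pow]
  ring

theorem map_theta_pow_sub_theta_of_hasseDerivTheta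
    (hE : ∀ n f, PowerSeries.coeff n (E (embPoly F f)) = embPoly F (hasseDerivTheta F n f))
    {N n : ℕ} (hN : N = p ^ n) :
    E (RatFunc.C (RatFunc.X : RatFunc F) ^ N - RatFunc.C (RatFunc.X : RatFunc F)) =
      PowerSeries.C (RatFunc.C (RatFunc.X : RatFunc F) ^ N - RatFunc.C (RatFunc.X : RatFunc F)) -
        PowerSeries.X + PowerSeries.X ^ N := by
  rw [map_sub, map_pow, map_theta_of_hasseDerivTheta E hE, hN, add_pow_char_pow]
  simp only [map_sub, map_pow]
  ring

theorem map_t_pow_sub_theta_of_hasseDerivTheta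
    (hE : ∀ n f, PowerSeries.coeff n (E (embPoly F f)) = embPoly F (hasseDerivTheta F n f))
    (N : ℕ) :
    E ((RatFunc.X : RatFunc (RatFunc F)) ^ N - RatFunc.C (RatFunc.X : RatFunc F)) =
      PowerSeries.C ((RatFunc.X : RatFunc (RatFunc F)) ^ N - RatFunc.C (RatFunc.X : RatFunc F)) -
        PowerSeries.X := by
  rw [map_sub, map_pow, map_theta_of_hasseDerivTheta E hE, map_t_of_hasseDerivTheta E hE]
  simp only [map_sub, map_pow]
  ring

end Frobenius

section RegularAtTheta

def thetaReg : RegularAt (RatFunc.X : RatFunc F) :=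
  algebraMap (RatFunc F)[X] _ (C RatFunc.X)

def tReg : RegularAt (RatFunc.X : RatFunc F) := algebraMap (RatFunc F)[X] _ X

variable {F}

@[simp]
theorem toRatFunc_thetaReg :
    RegularAt.toRatFunc _ (thetaReg F) = RatFunc.C (RatFunc.X : RatFunc F) := by
  simp [thetaReg]

@[simp]
theorem toRatFunc_tReg : RegularAt.toRatFunc _ (tReg F) = RatFunc.X := by
  simp [tReg]

@[simp]
theorem eval_thetaReg : RegularAt.eval _ (thetaReg F) = RatFunc.X := by
  simp [thetaReg]

@[simp]
theorem eval_tReg : RegularAt.eval _ (tReg F) = RatFunc.X := by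
  simp [tReg]

theorem RatFunc.X_pow_sub_X_ne_zero {N : ℕ} (hN : 1 < N) :
    (RatFunc.X : RatFunc F) ^ N - RatFunc.X ≠ 0 := by
  rw [← RatFunc.algebraMap_X, ← map_pow, ← map_sub]
  exact RatFunc.algebraMap_ne_zero (FiniteField.X_pow_card_sub_X_ne_zero F hN)

theorem isUnit_thetaReg_pow_sub_tReg {N : ℕ} (hN : 1 < N) : IsUnit (thetaReg F ^ N - tReg F) :=
  RegularAt.isUnit_of_eval_ne_zero _ (by simpa using RatFunc.X_pow_sub_X_ne_zero hN)

theorem isUnit_thetaReg_pow_sub_thetaReg {N : ℕ} (hN : 1 < N) :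
    IsUnit (thetaReg F ^ N - thetaReg F) :=
  RegularAt.isUnit_of_eval_ne_zero _ (by simpa using RatFunc.X_pow_sub_X_ne_zero hN)

theorem isUnit_theta_pow_sub_t {N : ℕ} (hN : 1 < N) :
    IsUnit (RatFunc.C (RatFunc.X : RatFunc F) ^ N - RatFunc.X) := by
  simpa using (isUnit_thetaReg_pow_sub_tReg (F := F) hN).map (RegularAt.toRatFunc _)

theorem isUnit_theta_pow_sub_theta {N : ℕ} (hN : 1 < N) :
    IsUnit (RatFunc.C (RatFunc.X : RatFunc F) ^ N - RatFunc.C (RatFunc.X : RatFunc F)) := by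
  simpa using (isUnit_thetaReg_pow_sub_thetaReg (F := F) hN).map (RegularAt.toRatFunc _)

theorem isUnit_C_thetaReg_pow_sub_tReg_sub_X {N : ℕ} (hN : 1 < N) :
    IsUnit (PowerSeries.C (thetaReg F ^ N - tReg F) - PowerSeries.X) :=
  PowerSeries.isUnit_iff_constantCoeff.mpr (by simpa using isUnit_thetaReg_pow_sub_tReg hN)

end RegularAtTheta

section Series

def bSeries (q M : ℕ) : (RatFunc (RatFunc F))⟦X⟧ :=
  ∏ i ∈ Icc 1 M, PowerSeries.C (RatFunc.C (RatFunc.X : RatFunc F) ^ q ^ i - RatFunc.X) *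
    Ring.inverse (PowerSeries.C (RatFunc.C (RatFunc.X : RatFunc F) ^ q ^ i - RatFunc.X) +
      PowerSeries.X ^ q ^ i)

def bSeriesReg (q M : ℕ) : (RegularAt (RatFunc.X : RatFunc F))⟦X⟧⟦X⟧ :=
  ∏ i ∈ Icc 1 M, PowerSeries.C (PowerSeries.C (thetaReg F ^ q ^ i - tReg F) - PowerSeries.X) *
    Ring.inverse (PowerSeries.C (PowerSeries.C (thetaReg F ^ q ^ i - tReg F) - PowerSeries.X) +
      PowerSeries.X ^ q ^ i)

def etaSeriesReg (q M : ℕ) : (RegularAt (RatFunc.X : RatFunc F))⟦X⟧ :=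
  ∏ m ∈ Icc 1 M,
    Ring.inverse (PowerSeries.C (thetaReg F ^ q ^ m - thetaReg F) - PowerSeries.X +
      PowerSeries.X ^ q ^ m) * (PowerSeries.C (tReg F ^ q ^ m - thetaReg F) - PowerSeries.X)

variable {F} {p : ℕ} [Fact p.Prime] [CharP F p]

theorem Lprod_eq_prod (q j : ℕ) :
    Lprod F q j =
      ∏ i ∈ Icc 1 (Nat.log q j), (RatFunc.C (RatFunc.X : RatFunc F) ^ q ^ i - RatFunc.X) := by
  simp [Lprod, map_prod]

theorem coeff_bSeries {D : ℕ → RatFunc (RatFunc F) → RatFunc (RatFunc F)}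
    (hD : IsHigherDerivation D)
    (hDpoly : ∀ n f, D n (embPoly F f) = embPoly F (hasseDerivTheta F n f))
    {q e : ℕ} (hq : q = p ^ e) (hq1 : 1 < q) {M j : ℕ} (hj : j < q ^ (M + 1)) :
    Lprod F q j * D j (Lprod F q j)⁻¹ = PowerSeries.coeff j (bSeries F q M) := by
  set E := hD.toRingHom
  have hE : ∀ n f, PowerSeries.coeff n (E (embPoly F f)) = embPoly F (hasseDerivTheta F n f) := by
    simp [E, hDpoly]
  have hunit : ∀ i, 0 < i → IsUnit (RatFunc.C (RatFunc.X : RatFunc F) ^ q ^ i - RatFunc.X) :=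
    fun i hi ↦ isUnit_theta_pow_sub_t (Nat.one_lt_pow hi.ne' hq1)
  have hlog : Nat.log q j ≤ M := by
    rcases eq_or_ne j 0 with rfl | hj0
    · simp
    · exact Nat.lt_succ_iff.mp (Nat.log_lt_of_lt_pow hj0 hj)
  calc Lprod F q j * D j (Lprod F q j)⁻¹
      = PowerSeries.coeff j (PowerSeries.C (Lprod F q j) * E (Lprod F q j)⁻¹) := by simp [E]
    _ = PowerSeries.coeff j (bSeries F q (Nat.log q j)) := by
      rw [Lprod_eq_prod, ← prod_inv_distrib, map_prod, map_prod, ← prod_mul_distrib, bSeries]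
      refine congrArg _ (prod_congr rfl fun i hi ↦ ?_)
      have hi : 0 < i := (mem_Icc.mp hi).1
      rw [← Ring.inverse_eq_inv, map_ringInverse E (hunit i hi),
        map_theta_pow_sub_t_of_hasseDerivTheta E hE (n := e * i) (by rw [hq, pow_mul])]
    _ = PowerSeries.coeff j (bSeries F q M) := by
      refine (PowerSeries.coeff_prod_Icc_eq_of_X_pow_dvd_sub_one _ hlog fun i hi ↦ ?_).symm
      have hi := mem_Ioc.mp hi
      refine (pow_dvd_pow _ ?_).trans
        (PowerSeries.X_pow_dvd_C_mul_inverse_C_add_X_pow_sub_one (hunit i (by omega)) ?_)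
      · exact (Nat.lt_pow_succ_log_self hq1 j).trans_le (Nat.pow_le_pow_right hq1.le hi.1)
      · exact (pow_pos (by omega) i).ne'

theorem map_bSeries {D : ℕ → RatFunc (RatFunc F) → RatFunc (RatFunc F)}
    (hD : IsHigherDerivation D)
    (hDpoly : ∀ n f, D n (embPoly F f) = embPoly F (hasseDeriv n f)) {q : ℕ} (hq1 : 1 < q)
    (M : ℕ) :
    PowerSeries.map hD.toRingHom (bSeries F q M) =
      PowerSeries.map (PowerSeries.map (RegularAt.toRatFunc _)) (bSeriesReg F q M) := by
  have hE : ∀ n f, PowerSeries.coeff n (hD.toRingHom (embPoly F f)) =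
      embPoly F (hasseDeriv n f) := by
    simp [hDpoly]
  rw [bSeries, bSeriesReg, map_prod, map_prod]
  refine prod_congr rfl fun i hi ↦ ?_
  have hN : 1 < q ^ i := Nat.one_lt_pow (Nat.pos_iff_ne_zero.mp (mem_Icc.mp hi).1) hq1
  have hu := isUnit_C_thetaReg_pow_sub_tReg_sub_X (F := F) hN
  rw [PowerSeries.map_C_mul_inverse_C_add_X_pow _ (isUnit_theta_pow_sub_t hN) (by omega),
    PowerSeries.map_C_mul_inverse_C_add_X_pow _ hu (by omega),
    map_theta_pow_sub_t_of_hasseDeriv _ hE]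
  simp

theorem algebraMap_etaPoly (q M : ℕ) :
    algebraMap (RatFunc F)[X] (RatFunc (RatFunc F)) (etaPoly F q M) =
      ∏ m ∈ Icc 1 M,
        (RatFunc.C (RatFunc.X : RatFunc F) ^ q ^ m - RatFunc.C (RatFunc.X : RatFunc F))⁻¹ *
          (RatFunc.X ^ q ^ m - RatFunc.C (RatFunc.X : RatFunc F)) := by
  simp [etaPoly, map_prod]

theorem map_etaPoly {D : ℕ → RatFunc (RatFunc F) → RatFunc (RatFunc F)}
    (hD : IsHigherDerivation D)
    (hDpoly : ∀ n f, D n (embPoly F f) = embPoly F (hasseDerivTheta F n f))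
    {q e : ℕ} (hq : q = p ^ e) (hq1 : 1 < q) (M : ℕ) :
    hD.toRingHom (algebraMap (RatFunc F)[X] (RatFunc (RatFunc F)) (etaPoly F q M)) =
      PowerSeries.map (RegularAt.toRatFunc _) (etaSeriesReg F q M) := by
  set E := hD.toRingHom
  have hE : ∀ n f, PowerSeries.coeff n (E (embPoly F f)) = embPoly F (hasseDerivTheta F n f) := by
    simp [E, hDpoly]
  rw [algebraMap_etaPoly, etaSeriesReg, map_prod, map_prod]
  refine prod_congr rfl fun m hm ↦ ?_
  have hN : 1 < q ^ m := Nat.one_lt_pow (Nat.pos_iff_ne_zero.mp (mem_Icc.mp hm).1) hq1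
  rw [PowerSeries.map_inverse_C_sub_X_add_X_pow_mul _ (isUnit_thetaReg_pow_sub_thetaReg hN)
      (by omega), map_mul, ← Ring.inverse_eq_inv,
    map_ringInverse E (isUnit_theta_pow_sub_theta hN),
    map_theta_pow_sub_theta_of_hasseDerivTheta E hE (n := e * m) (by rw [hq, pow_mul]),
    map_t_pow_sub_theta_of_hasseDerivTheta E hE]
  simp

theorem restrictDiagonal_map_bSeriesReg {q : ℕ} (hq1 : 1 < q) (M : ℕ) :
    PowerSeries.restrictDiagonal
        (PowerSeries.map (PowerSeries.map (RegularAt.eval _)) (bSeriesReg F q M)) =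
      PowerSeries.map (RegularAt.eval _) (etaSeriesReg F q M) := by
  rw [bSeriesReg, etaSeriesReg, map_prod, map_prod, map_prod]
  refine prod_congr rfl fun i hi ↦ ?_
  have hN : 1 < q ^ i := Nat.one_lt_pow (Nat.pos_iff_ne_zero.mp (mem_Icc.mp hi).1) hq1
  have ha : IsUnit (PowerSeries.C ((RatFunc.X : RatFunc F) ^ q ^ i - RatFunc.X) - PowerSeries.X) :=
    PowerSeries.isUnit_iff_constantCoeff.mpr (by simpa using RatFunc.X_pow_sub_X_ne_zero hN)
  have hx : PowerSeries.map (RegularAt.eval _)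
      (PowerSeries.C (thetaReg F ^ q ^ i - tReg F) - PowerSeries.X) =
        PowerSeries.C ((RatFunc.X : RatFunc F) ^ q ^ i - RatFunc.X) - PowerSeries.X := by
    simp
  have hw : RegularAt.eval _ (thetaReg F ^ q ^ i - thetaReg F) = RatFunc.X ^ q ^ i - RatFunc.X := by
    simp
  have hy : RegularAt.eval _ (tReg F ^ q ^ i - thetaReg F) = RatFunc.X ^ q ^ i - RatFunc.X := by
    simp
  rw [PowerSeries.map_C_mul_inverse_C_add_X_pow _ (isUnit_C_thetaReg_pow_sub_tReg_sub_X hN)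
      (by omega),
    PowerSeries.map_inverse_C_sub_X_add_X_pow_mul _ (isUnit_thetaReg_pow_sub_thetaReg hN)
      (by omega), hx, hw, hy, PowerSeries.restrictDiagonal_C_mul_inverse_C_add_X_pow ha (by omega),
    mul_comm]

end Series

theorem sum_hasseDeriv_b_eval_eq_hasseDeriv_eta
    (p e q : ℕ) (hp : p.Prime) (hq : q = p ^ e)
    [Fintype F] (hF : Fintype.card F = q)
    (Dθ Dt : ℕ → RatFunc (RatFunc F) → RatFunc (RatFunc F))
    (hDθ0 : Dθ 0 = id)
    (hDθadd : ∀ n x y, Dθ n (x + y) = Dθ n x + Dθ n y)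
    (hDθleib : ∀ n x y,
      Dθ n (x * y) = ∑ ij ∈ Finset.HasAntidiagonal.antidiagonal n, Dθ ij.1 x * Dθ ij.2 y)
    (hDθpoly : ∀ n f, Dθ n (embPoly F f) = embPoly F (hasseDerivTheta F n f))
    (hDt0 : Dt 0 = id)
    (hDtadd : ∀ n x y, Dt n (x + y) = Dt n x + Dt n y)
    (hDtleib : ∀ n x y,
      Dt n (x * y) = ∑ ij ∈ Finset.HasAntidiagonal.antidiagonal n, Dt ij.1 x * Dt ij.2 y)
    (hDtpoly : ∀ n f, Dt n (embPoly F f) = embPoly F (Polynomial.hasseDeriv n f))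
    (b : ℕ → RatFunc (RatFunc F))
    (hb0 : b 0 = 1)
    (hbj : ∀ j, 0 < j → b j = Lprod F q j * Dθ j (Lprod F q j)⁻¹)
    (n l : ℕ) (hl : n ≤ q ^ l)
    (k : ℕ) (hk : k < n) :
    (∀ ij ∈ Finset.HasAntidiagonal.antidiagonal k,
      (Dt ij.1 (b ij.2)).denom.eval (RatFunc.X : RatFunc F) ≠ 0) ∧
    (Dθ k (algebraMap (Polynomial (RatFunc F)) (RatFunc (RatFunc F))
        (etaPoly F q (l - 1)))).denom.eval (RatFunc.X : RatFunc F) ≠ 0 ∧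
    (∑ ij ∈ Finset.HasAntidiagonal.antidiagonal k,
        RatFunc.eval (RingHom.id (RatFunc F)) (RatFunc.X : RatFunc F) (Dt ij.1 (b ij.2)))
      = RatFunc.eval (RingHom.id (RatFunc F)) (RatFunc.X : RatFunc F)
          (Dθ k (algebraMap (Polynomial (RatFunc F)) (RatFunc (RatFunc F))
            (etaPoly F q (l - 1)))) := by
  have := Fact.mk hp
  have : CharP F p := charP_of_card_eq_prime_pow (hF.trans hq)
  have hq1 : 1 < q := hF ▸ Fintype.one_lt_card
  have hθ : IsHigherDerivation Dθ := ⟨hDθ0, hDθadd, hDθleib⟩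
  have ht : IsHigherDerivation Dt := ⟨hDt0, hDtadd, hDtleib⟩
  have hb : ∀ j ≤ k, b j = PowerSeries.coeff j (bSeries F q (l - 1)) := by
    intro j hj
    have hjq : j < q ^ (l - 1 + 1) :=
      lt_of_lt_of_le (by omega) (Nat.pow_le_pow_right hq1.le (by omega) : q ^ l ≤ _)
    rw [← coeff_bSeries hθ hDθpoly hq hq1 hjq]
    rcases j.eq_zero_or_pos with rfl | hj0
    · simp [hb0, Lprod, hDθ0]
    · exact hbj j hj0
  have hterm : ∀ ij ∈ antidiagonal k, Dt ij.1 (b ij.2) =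
      RegularAt.toRatFunc _
        (PowerSeries.coeff ij.1 (PowerSeries.coeff ij.2 (bSeriesReg F q (l - 1)))) := by
    intro ij hij
    rw [hb ij.2 (HasAntidiagonal.antidiagonal.snd_le hij), ← ht.coeff_toRingHom,
      ← PowerSeries.coeff_map, map_bSeries ht hDtpoly hq1, PowerSeries.coeff_map,
      PowerSeries.coeff_map]
  have hrhs : Dθ k (algebraMap _ _ (etaPoly F q (l - 1))) =
      RegularAt.toRatFunc _ (PowerSeries.coeff k (etaSeriesReg F q (l - 1))) := by
    rw [← hθ.coeff_toRingHom, map_etaPoly hθ hDθpoly hq hq1, PowerSeries.coeff_map]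
  refine ⟨fun ij hij ↦ hterm ij hij ▸ RegularAt.eval_denom_toRatFunc_ne_zero _ _,
    hrhs ▸ RegularAt.eval_denom_toRatFunc_ne_zero _ _, ?_⟩
  rw [sum_congr rfl fun ij hij ↦ by rw [hterm ij hij, RegularAt.ratFuncEval_toRatFunc], hrhs,
    RegularAt.ratFuncEval_toRatFunc, ← PowerSeries.coeff_map,
    ← restrictDiagonal_map_bSeriesReg hq1, PowerSeries.coeff_restrictDiagonal]
  simp [PowerSeries.coeff_map]
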